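/- arXiv:1907.00629 — 2 statements merged into one kernel-verified Lean document; each statement's English description precedes it below -/
import Mathlib

section
/- For each t ≥ 0 and β > 0, the spin-polarized kinetic energy densities τ̃_β(t, s) := sup_{ν ≥ 0}(tν − (1+β)^{-3/5} P̃_{k_β}(ν, s)) satisfy the chain of inequalities 2 τ̃_β(t, −1) ≤ τ_β(2t) ≤ τ̃_β(t, −1) + τ̃_β(t, 1) ≤ 2 τ̃_β(t, −1) + 4 k_β t, where τ_β(t) := sup_{ν ≥ 0}(tν − (1+β)^{-3/5} P_{k_β}(ν)) and k_β = β(1+β)^{-2/5}. -/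
open MeasureTheory Real

/-- The spin-summed pressure of the free Landau gas. -/
noncomputable def landauP (B ν : ℝ) : ℝ :=
  B / (3 * π ^ 2) *
    (ν ^ ((3 : ℝ) / 2) + 2 * ∑' j : ℕ, max (ν - 2 * ((j : ℝ) + 1) * B) 0 ^ ((3 : ℝ) / 2))

/-- The spin-polarized pressure of the free Landau gas, with spin value `s ∈ {−1, +1}`. -/
noncomputable def spinLandauP (B ν s : ℝ) : ℝ :=
  B / (3 * π ^ 2) * ∑' j : ℕ, max (ν - B * (2 * (j : ℝ) + 1 + s)) 0 ^ ((3 : ℝ) / 2)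

/-- `k_β = β (1+β)^{-2/5}`. -/
noncomputable def kβ (β : ℝ) : ℝ := β * (1 + β) ^ (-(2 : ℝ) / 5)

/-- The spin-summed kinetic energy density `τ_β`, the Legendre transform of the scaled
pressure over `ν ≥ 0`. -/
noncomputable def tauβ (β t : ℝ) : ℝ :=
  sSup {y : ℝ | ∃ ν : ℝ, 0 ≤ ν ∧ y = t * ν - (1 + β) ^ (-(3 : ℝ) / 5) * landauP (kβ β) ν}

/-- The spin-polarized kinetic energy density `τ̃_β(·, s)`. -/
noncomputable def tauβSpin (β t s : ℝ) : ℝ :=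
  sSup {y : ℝ | ∃ ν : ℝ, 0 ≤ ν ∧ y = t * ν - (1 + β) ^ (-(3 : ℝ) / 5) * spinLandauP (kβ β) ν s}

lemma summable_landau (B ν s : ℝ) (hB : 0 < B) (hs : -1 ≤ s) :
    Summable (fun j : ℕ => max (ν - B * (2 * (j : ℝ) + 1 + s)) 0 ^ ((3 : ℝ) / 2)) := by
  apply summable_of_ne_finset_zero (s := Finset.range (⌈ν / (2 * B)⌉₊ + 1))
  intro j hj
  simp only [Finset.mem_range, not_lt] at hj
  have h1 : (⌈ν / (2 * B)⌉₊ + 1 : ℝ) ≤ (j : ℝ) := by exact_mod_cast hj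
  have h2 : ν / (2 * B) ≤ (j : ℝ) := by
    have := Nat.le_ceil (ν / (2 * B)); linarith
  have h3 : ν ≤ B * (2 * (j : ℝ)) := by
    rw [div_le_iff₀ (by positivity)] at h2; linarith
  have hmax : max (ν - B * (2 * (j : ℝ) + 1 + s)) 0 = 0 := by
    apply max_eq_right; nlinarith
  rw [hmax, Real.zero_rpow (by norm_num)]

lemma spinLandauP_nonneg (B ν s : ℝ) (hB : 0 < B) : 0 ≤ spinLandauP B ν s := by
  unfold spinLandauP
  apply mul_nonneg (by positivity)
  exact tsum_nonneg fun j => Real.rpow_nonneg (le_max_right _ _) _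

lemma spinLandauP_zero (B s : ℝ) (hB : 0 < B) (hs : -1 ≤ s) : spinLandauP B 0 s = 0 := by
  unfold spinLandauP
  have h : ∀ j : ℕ, max ((0:ℝ) - B * (2 * (j : ℝ) + 1 + s)) 0 ^ ((3:ℝ)/2) = 0 := by
    intro j
    have hj : (0:ℝ) ≤ (j:ℝ) := Nat.cast_nonneg j
    rw [max_eq_right (by nlinarith), Real.zero_rpow (by norm_num)]
  rw [tsum_congr h, tsum_zero, mul_zero]

lemma spinLandauP_shift (B ν : ℝ) : spinLandauP B ν 1 = spinLandauP B (ν - 2 * B) (-1) := by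
  unfold spinLandauP
  congr 1
  apply tsum_congr
  intro j
  have h : ν - B * (2 * (j:ℝ) + 1 + 1) = (ν - 2 * B) - B * (2 * (j:ℝ) + 1 + (-1)) := by ring
  rw [h]

lemma spinLandauP_mono (B ν : ℝ) (hB : 0 < B) :
    spinLandauP B ν 1 ≤ spinLandauP B ν (-1) := by
  unfold spinLandauP
  apply mul_le_mul_of_nonneg_left _ (by positivity)
  apply Summable.tsum_le_tsum _ (summable_landau B ν 1 hB (by norm_num)) (summable_landau B ν (-1) hB le_rfl)
  intro j
  apply Real.rpow_le_rpow (le_max_right _ _) _ (by norm_num)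
  apply max_le_max _ le_rfl
  nlinarith

lemma spinLandauP_add (B ν : ℝ) (hB : 0 < B) (hν : 0 ≤ ν) :
    spinLandauP B ν (-1) + spinLandauP B ν 1 = landauP B ν := by
  unfold spinLandauP landauP
  rw [← mul_add]
  congr 1
  have hsum := summable_landau B ν (-1) hB le_rfl
  rw [Summable.tsum_eq_zero_add hsum]
  have h0 : max (ν - B * (2 * ((0:ℕ):ℝ) + 1 + (-1))) 0 ^ ((3:ℝ)/2) = ν ^ ((3:ℝ)/2) := by
    norm_num [max_eq_left hν]
  have h1 : ∀ j : ℕ, max (ν - B * (2 * ((j+1 : ℕ):ℝ) + 1 + (-1))) 0 ^ ((3:ℝ)/2)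
      = max (ν - 2 * ((j:ℝ) + 1) * B) 0 ^ ((3:ℝ)/2) := by
    intro j
    push_cast
    ring_nf
  have h2 : ∀ j : ℕ, max (ν - B * (2 * (j:ℝ) + 1 + 1)) 0 ^ ((3:ℝ)/2)
      = max (ν - 2 * ((j:ℝ) + 1) * B) 0 ^ ((3:ℝ)/2) := by
    intro j
    ring_nf
  rw [h0, tsum_congr h1, tsum_congr h2]
  ring

lemma spin_bound (B c t : ℝ) (hB : 0 < B) (hc : 0 < c) (ht : 0 ≤ t) :
    ∃ M : ℝ, 0 ≤ M ∧ ∀ μ : ℝ, t * μ - c * spinLandauP B μ (-1) ≤ M := by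
  have hπ : (0:ℝ) < π := Real.pi_pos
  set a : ℝ := c * (B / (3 * π ^ 2)) with ha
  have ha0 : 0 < a := by positivity
  set R : ℝ := (t / a) ^ 2 with hR
  refine ⟨t * R, by positivity, fun μ => ?_⟩
  have hkey : a * max μ 0 ^ ((3:ℝ)/2) ≤ c * spinLandauP B μ (-1) := by
    unfold spinLandauP
    rw [← mul_assoc, ← ha]
    apply mul_le_mul_of_nonneg_left _ ha0.le
    have h0 : max μ 0 ^ ((3:ℝ)/2)
        = (fun j : ℕ => max (μ - B * (2 * (j:ℝ) + 1 + (-1))) 0 ^ ((3:ℝ)/2)) 0 := by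
      norm_num
    rw [h0]
    exact Summable.le_tsum (summable_landau B μ (-1) hB le_rfl) 0
      (fun j _ => Real.rpow_nonneg (le_max_right _ _) _)
  have h2 : t * μ - a * max μ 0 ^ ((3:ℝ)/2) ≤ t * R := by
    rcases le_or_gt μ R with h | h
    · have hnn : 0 ≤ a * max μ 0 ^ ((3:ℝ)/2) :=
        mul_nonneg ha0.le (Real.rpow_nonneg (le_max_right _ _) _)
      nlinarith
    · have hR0 : 0 ≤ R := sq_nonneg _
      have hμ0 : 0 < μ := lt_of_le_of_lt hR0 h
      have hmax : max μ 0 = μ := max_eq_left hμ0.le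
      have hsq : t / a ≤ Real.sqrt μ := by
        rw [show (t / a) = Real.sqrt ((t / a) ^ 2) from (Real.sqrt_sq (by positivity)).symm]
        exact Real.sqrt_le_sqrt h.le
      have hrw : μ ^ ((3:ℝ)/2) = μ * Real.sqrt μ := by
        rw [show ((3:ℝ)/2) = 1 + 1/2 by norm_num, Real.rpow_add hμ0, Real.rpow_one,
          ← Real.sqrt_eq_rpow]
      rw [hmax, hrw]
      have h3 : a * μ * (t / a) ≤ a * μ * Real.sqrt μ :=
        mul_le_mul_of_nonneg_left hsq (by positivity)
      have h4 : a * μ * (t / a) = t * μ := by field_simp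
      nlinarith
  linarith

lemma chain_aux (B c t : ℝ) (hB : 0 < B) (hc : 0 < c) (ht : 0 ≤ t) :
    2 * sSup {y : ℝ | ∃ ν : ℝ, 0 ≤ ν ∧ y = t * ν - c * spinLandauP B ν (-1)} ≤
      sSup {y : ℝ | ∃ ν : ℝ, 0 ≤ ν ∧ y = 2 * t * ν - c * landauP B ν} ∧
    sSup {y : ℝ | ∃ ν : ℝ, 0 ≤ ν ∧ y = 2 * t * ν - c * landauP B ν} ≤
      sSup {y : ℝ | ∃ ν : ℝ, 0 ≤ ν ∧ y = t * ν - c * spinLandauP B ν (-1)} +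
      sSup {y : ℝ | ∃ ν : ℝ, 0 ≤ ν ∧ y = t * ν - c * spinLandauP B ν 1} ∧
    sSup {y : ℝ | ∃ ν : ℝ, 0 ≤ ν ∧ y = t * ν - c * spinLandauP B ν (-1)} +
      sSup {y : ℝ | ∃ ν : ℝ, 0 ≤ ν ∧ y = t * ν - c * spinLandauP B ν 1} ≤
      2 * sSup {y : ℝ | ∃ ν : ℝ, 0 ≤ ν ∧ y = t * ν - c * spinLandauP B ν (-1)} + 4 * B * t := by
  obtain ⟨M, hM0, hMall⟩ := spin_bound B c t hB hc ht
  set Sm := {y : ℝ | ∃ ν : ℝ, 0 ≤ ν ∧ y = t * ν - c * spinLandauP B ν (-1)} with hSmdef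
  set Sp := {y : ℝ | ∃ ν : ℝ, 0 ≤ ν ∧ y = t * ν - c * spinLandauP B ν 1} with hSpdef
  set S := {y : ℝ | ∃ ν : ℝ, 0 ≤ ν ∧ y = 2 * t * ν - c * landauP B ν} with hSdef
  have hL0 : landauP B 0 = 0 := by
    rw [← spinLandauP_add B 0 hB le_rfl, spinLandauP_zero B (-1) hB le_rfl,
      spinLandauP_zero B 1 hB (by norm_num)]
    ring
  have h0m : (0:ℝ) ∈ Sm := ⟨0, le_rfl, by rw [spinLandauP_zero B (-1) hB le_rfl]; ring⟩
  have h0p : (0:ℝ) ∈ Sp := ⟨0, le_rfl, by rw [spinLandauP_zero B 1 hB (by norm_num)]; ring⟩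
  have h0S : (0:ℝ) ∈ S := ⟨0, le_rfl, by rw [hL0]; ring⟩
  have hbm : BddAbove Sm := by
    refine ⟨M, ?_⟩
    rintro y ⟨ν, hν, rfl⟩
    exact hMall ν
  have hbp : BddAbove Sp := by
    refine ⟨M + 2 * t * B, ?_⟩
    rintro y ⟨ν, hν, rfl⟩
    rw [spinLandauP_shift]
    have := hMall (ν - 2 * B)
    linarith
  have hbS : BddAbove S := by
    refine ⟨M + (M + 2 * t * B), ?_⟩
    rintro y ⟨ν, hν, rfl⟩
    have h1 := hMall ν
    have h2 : t * ν - c * spinLandauP B ν 1 ≤ M + 2 * t * B := by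
      rw [spinLandauP_shift]
      have := hMall (ν - 2 * B)
      linarith
    rw [← spinLandauP_add B ν hB hν, mul_add]
    linarith
  have hm0 : 0 ≤ sSup Sm := le_csSup hbm h0m
  have hp0 : 0 ≤ sSup Sp := le_csSup hbp h0p
  have hkeym : ∀ μ : ℝ, t * μ - c * spinLandauP B μ (-1) ≤ sSup Sm := by
    intro μ
    rcases le_or_gt 0 μ with h | h
    · exact le_csSup hbm ⟨μ, h, rfl⟩
    · have h1 := spinLandauP_nonneg B μ (-1) hB
      nlinarith
  have part1 : 2 * sSup Sm ≤ sSup S := by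
    have h1 : ∀ y ∈ Sm, y ≤ sSup S / 2 := by
      rintro y ⟨ν, hν, rfl⟩
      have hmono := spinLandauP_mono B ν hB
      have hel : 2 * t * ν - c * landauP B ν ∈ S := ⟨ν, hν, rfl⟩
      have h2 := le_csSup hbS hel
      have h3 : 2 * (t * ν - c * spinLandauP B ν (-1)) ≤ 2 * t * ν - c * landauP B ν := by
        rw [← spinLandauP_add B ν hB hν, mul_add]
        nlinarith [mul_le_mul_of_nonneg_left hmono hc.le]
      linarith
    have h4 := csSup_le ⟨0, h0m⟩ h1
    linarith
  have part2 : sSup S ≤ sSup Sm + sSup Sp := by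
    apply csSup_le ⟨0, h0S⟩
    rintro y ⟨ν, hν, rfl⟩
    have h1 : t * ν - c * spinLandauP B ν (-1) ∈ Sm := ⟨ν, hν, rfl⟩
    have h2 : t * ν - c * spinLandauP B ν 1 ∈ Sp := ⟨ν, hν, rfl⟩
    have h3 := le_csSup hbm h1
    have h4 := le_csSup hbp h2
    rw [← spinLandauP_add B ν hB hν, mul_add]
    linarith
  have part3 : sSup Sp ≤ sSup Sm + 4 * B * t := by
    apply csSup_le ⟨0, h0p⟩
    rintro y ⟨ν, hν, rfl⟩
    rw [spinLandauP_shift]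
    have h1 := hkeym (ν - 2 * B)
    have htB : 0 ≤ t * B := mul_nonneg ht hB.le
    linarith
  exact ⟨part1, part2, by linarith⟩

/-- The chain of inequalities
`2 τ̃_β(t,−1) ≤ τ_β(2t) ≤ τ̃_β(t,−1) + τ̃_β(t,1) ≤ 2 τ̃_β(t,−1) + 4 k_β t`. -/
theorem tauβSpin_chain (β t : ℝ) (hβ : 0 < β) (ht : 0 ≤ t) :
    2 * tauβSpin β t (-1) ≤ tauβ β (2 * t) ∧
    tauβ β (2 * t) ≤ tauβSpin β t (-1) + tauβSpin β t 1 ∧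
    tauβSpin β t (-1) + tauβSpin β t 1 ≤ 2 * tauβSpin β t (-1) + 4 * kβ β * t := by
  have hc : 0 < (1 + β) ^ (-(3:ℝ)/5) := Real.rpow_pos_of_pos (by linarith) _
  have hB : 0 < kβ β := by
    have h2 : 0 < (1 + β) ^ (-(2:ℝ)/5) := Real.rpow_pos_of_pos (by linarith) _
    exact mul_pos hβ h2
  exact chain_aux (kβ β) ((1 + β) ^ (-(3:ℝ)/5)) t hB hc ht
end

section
/- Suppose F: [0,∞) → ℝ satisfies F(t) = sup_{v≥0}(tv − L₁ B v^{3/2} − L₂ v^{5/2}) with constants L₁ ≥ 0, B ≥ 0, 0 < L₂ < 1, and suppose ρ ≥ 0 is integrable on ℝ³ and satisfies ∫ (ρ f − L₁ B f^{3/2} − L₂ f^{5/2}) dx ≤ C for all 0 ≤ f ∈ L^{3/2}(ℝ³) ∩ L^{5/2}(ℝ³) with a constant C independent of f. Then, choosing f_M = (ρ 1_{ρ≤M})^{2/3}, one obtains (1−L₂) ∫_{{ρ≤M}} ρ^{5/3} dx ≤ C + L₁ B ∫_{{ρ≤M}} ρ dx for every M, and hence ρ ∈ L^{5/3}(ℝ³).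 -/
/-!
Test the dual bound against `f_M = (ρ 1_{ρ ≤ M})^{2/3}`, which is admissible because the
truncation makes `f_M^{5/2} = ρ^{5/3} 1_{ρ ≤ M} ≤ M^{2/3} ρ` integrable. Then `ρ f_M` and
`f_M^{5/2}` are both `ρ^{5/3} 1_{ρ ≤ M}` while `f_M^{3/2} = ρ 1_{ρ ≤ M}`, so the bound reads
`(1 - L₂) ∫_{ρ ≤ M} ρ^{5/3} ≤ C + L₁ B ∫_{ρ ≤ M} ρ`. As `L₂ < 1` the left integrals are bounded
uniformly in `M`, and exhausting the space by the sublevel sets `{ρ ≤ M}` gives `ρ^{5/3} ∈ L¹`.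
-/

open MeasureTheory Real Set Filter

theorem indicator_rpow_apply {α : Type*} {s : Set α} {g : α → ℝ} {p : ℝ} (hp : p ≠ 0) (x : α) :
    s.indicator g x ^ p = s.indicator (fun y => g y ^ p) x := by
  by_cases hx : x ∈ s <;> simp [hx, zero_rpow hp]

section

variable {α : Type*} [MeasurableSpace α] {μ : Measure α}

theorem memLp_ofReal_of_integrable_rpow {f : α → ℝ} {p : ℝ} (hp : 0 < p)
    (hf : AEStronglyMeasurable f μ) (hf0 : 0 ≤ᵐ[μ] f) (h : Integrable (fun x => f x ^ p) μ) :
    MemLp f (ENNReal.ofReal p) μ := by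
  refine (integrable_norm_rpow_iff hf (by simpa using hp) ENNReal.ofReal_ne_top).1 ?_
  rw [ENNReal.toReal_ofReal hp.le]
  exact h.congr (hf0.mono fun x hx => by simp only [norm_of_nonneg hx])

theorem integrableOn_rpow_setOf_le {ρ : α → ℝ} (hρ0 : ∀ x, 0 ≤ ρ x) (hρ : Integrable ρ μ)
    {q : ℝ} (hq : 1 ≤ q) (M : ℝ) :
    IntegrableOn (fun x => ρ x ^ q) {x | ρ x ≤ M} μ := by
  have hs : NullMeasurableSet {x | ρ x ≤ M} μ :=
    nullMeasurableSet_le hρ.aemeasurable aemeasurable_const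
  refine (hρ.integrableOn.const_mul (M ^ (q - 1))).mono'
    (hρ.aemeasurable.pow_const q).aestronglyMeasurable.restrict ?_
  filter_upwards [ae_restrict_mem₀ hs] with x (hx : ρ x ≤ M)
  calc ‖ρ x ^ q‖ = ρ x ^ (q - 1) * ρ x := by
        rw [norm_of_nonneg (rpow_nonneg (hρ0 x) q), ← rpow_add_one' (hρ0 x) (by linarith),
          sub_add_cancel]
    _ ≤ M ^ (q - 1) * ρ x := by gcongr <;> exact hρ0 x

theorem aecover_toMeasurable_setOf_le (ρ : α → ℝ) :
    AECover μ atTop fun M : ℝ => toMeasurable μ {x | ρ x ≤ M} where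
  ae_eventually_mem := ae_of_all μ fun x =>
    (eventually_ge_atTop (ρ x)).mono fun _ hM => subset_toMeasurable μ _ hM
  measurableSet _ := measurableSet_toMeasurable μ _

theorem integrable_of_setIntegral_setOf_le_bounded {ρ h : α → ℝ} (hρ : AEMeasurable ρ μ)
    (hh0 : 0 ≤ᵐ[μ] h) (hint : ∀ M, IntegrableOn h {x | ρ x ≤ M} μ) (I : ℝ)
    (hbound : ∀ᶠ M in atTop, ∫ x in {x | ρ x ≤ M}, h x ∂μ ≤ I) :
    Integrable h μ := by
  -- `ρ` is only a.e. measurable, so the sublevel sets are replaced by their measurable hulls.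
  have hs (M : ℝ) : toMeasurable μ {x | ρ x ≤ M} =ᵐ[μ] {x | ρ x ≤ M} :=
    (nullMeasurableSet_le hρ aemeasurable_const).toMeasurable_ae_eq
  refine (aecover_toMeasurable_setOf_le ρ).integrable_of_integral_bounded_of_nonneg_ae I
    (fun M => (hint M).congr_set_ae (hs M)) hh0 ?_
  simpa only [setIntegral_congr_set (hs _)] using hbound

theorem one_sub_mul_setIntegral_rpow_le_of_dual_bound {ρ : α → ℝ} (hρ0 : ∀ x, 0 ≤ ρ x)
    (hρ : Integrable ρ μ) {A L C : ℝ}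
    (hdual : ∀ f : α → ℝ, (∀ x, 0 ≤ f x) → MemLp f (ENNReal.ofReal ((3 : ℝ) / 2)) μ →
      MemLp f (ENNReal.ofReal ((5 : ℝ) / 2)) μ →
      ∫ x, (ρ x * f x - A * f x ^ ((3 : ℝ) / 2) - L * f x ^ ((5 : ℝ) / 2)) ∂μ ≤ C) (M : ℝ) :
    (1 - L) * ∫ x in {x | ρ x ≤ M}, ρ x ^ ((5 : ℝ) / 3) ∂μ
      ≤ C + A * ∫ x in {x | ρ x ≤ M}, ρ x ∂μ := by
  set s := {x | ρ x ≤ M}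
  have hs : NullMeasurableSet s μ := nullMeasurableSet_le hρ.aemeasurable aemeasurable_const
  set f := s.indicator fun x => ρ x ^ ((2 : ℝ) / 3)
  have hf0 : ∀ x, 0 ≤ f x := indicator_nonneg fun y _ => rpow_nonneg (hρ0 y) _
  have hf32 (x : α) : f x ^ ((3 : ℝ) / 2) = s.indicator ρ x := by
    rw [indicator_rpow_apply (by norm_num)]
    simp only [← rpow_mul (hρ0 _)]
    norm_num
  have hf52 (x : α) : f x ^ ((5 : ℝ) / 2) = s.indicator (fun x => ρ x ^ ((5 : ℝ) / 3)) x := by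
    rw [indicator_rpow_apply (by norm_num)]
    simp only [← rpow_mul (hρ0 _)]
    norm_num
  have hρf (x : α) : ρ x * f x = s.indicator (fun x => ρ x ^ ((5 : ℝ) / 3)) x := by
    rw [← indicator_mul_right]
    simp only [← rpow_one_add' (hρ0 _) (by norm_num : (1 : ℝ) + 2 / 3 ≠ 0)]
    norm_num
  have hfm : AEStronglyMeasurable f μ :=
    (hρ.aemeasurable.pow_const _).aestronglyMeasurable.indicator₀ hs
  have hρ1 : Integrable (s.indicator ρ) μ := hρ.integrableOn.integrable_indicator₀ hs
  have hρ53 : Integrable (s.indicator fun x => ρ x ^ ((5 : ℝ) / 3)) μ :=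
    (integrableOn_rpow_setOf_le hρ0 hρ (by norm_num) M).integrable_indicator₀ hs
  have h := hdual f hf0
    (memLp_ofReal_of_integrable_rpow (by norm_num) hfm (ae_of_all _ hf0) (by simpa only [hf32]))
    (memLp_ofReal_of_integrable_rpow (by norm_num) hfm (ae_of_all _ hf0) (by simpa only [hf52]))
  simp only [hρf, hf32, hf52] at h
  rw [integral_sub, integral_sub hρ53 (hρ1.const_mul A), integral_const_mul, integral_const_mul,
    integral_indicator₀ hs, integral_indicator₀ hs] at h
  · linarith
  · exact hρ53.sub (hρ1.const_mul A)
  · exact hρ53.const_mul L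

end

theorem density_L53_from_dual_LT_bound_general
    (L₁ L₂ B C : ℝ) (hL₁ : 0 ≤ L₁) (hB : 0 ≤ B) (hL₂1 : L₂ < 1)
    (ρ : EuclideanSpace ℝ (Fin 3) → ℝ) (hρ0 : ∀ x, 0 ≤ ρ x) (hρint : Integrable ρ)
    (hdual : ∀ f : EuclideanSpace ℝ (Fin 3) → ℝ, (∀ x, 0 ≤ f x) →
      MemLp f (ENNReal.ofReal ((3 : ℝ) / 2)) (volume : Measure (EuclideanSpace ℝ (Fin 3))) →
      MemLp f (ENNReal.ofReal ((5 : ℝ) / 2)) (volume : Measure (EuclideanSpace ℝ (Fin 3))) →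
      ∫ x, (ρ x * f x - L₁ * B * f x ^ ((3 : ℝ) / 2) - L₂ * f x ^ ((5 : ℝ) / 2)) ≤ C) :
    (∀ M : ℝ, 0 < M →
      (1 - L₂) * ∫ x in {x | ρ x ≤ M}, ρ x ^ ((5 : ℝ) / 3)
        ≤ C + L₁ * B * ∫ x in {x | ρ x ≤ M}, ρ x) ∧
    MemLp ρ (ENNReal.ofReal ((5 : ℝ) / 3)) (volume : Measure (EuclideanSpace ℝ (Fin 3))) := by
  have htrunc := one_sub_mul_setIntegral_rpow_le_of_dual_bound hρ0 hρint hdual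
  refine ⟨fun M _ => htrunc M, ?_⟩
  have hbound (M : ℝ) : ∫ x in {x | ρ x ≤ M}, ρ x ^ ((5 : ℝ) / 3)
      ≤ (C + L₁ * B * ∫ x, ρ x) / (1 - L₂) := by
    have hsub : ∫ x in {x | ρ x ≤ M}, ρ x ≤ ∫ x, ρ x :=
      setIntegral_le_integral hρint (ae_of_all _ hρ0)
    rw [le_div_iff₀ (by linarith), mul_comm]
    linarith [htrunc M, mul_le_mul_of_nonneg_left hsub (mul_nonneg hL₁ hB)]
  refine memLp_ofReal_of_integrable_rpow (by norm_num) hρint.aestronglyMeasurable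
    (ae_of_all _ hρ0) ?_
  exact integrable_of_setIntegral_setOf_le_bounded hρint.aemeasurable
    (ae_of_all _ fun x => rpow_nonneg (hρ0 x) _)
    (integrableOn_rpow_setOf_le hρ0 hρint (by norm_num)) _ (Eventually.of_forall hbound)

/-- From a Lieb–Thirring-type dual bound to `L^{5/3}` integrability of the density:
if `ρ ≥ 0` is integrable on `ℝ³` and `∫ (ρ f − L₁ B f^{3/2} − L₂ f^{5/2}) ≤ C` for all
nonnegative `f ∈ L^{3/2} ∩ L^{5/2}`, with `0 < L₂ < 1`, then for every `M > 0`
`(1 − L₂) ∫_{ρ≤M} ρ^{5/3} ≤ C + L₁ B ∫_{ρ≤M} ρ`, and hence `ρ ∈ L^{5/3}(ℝ³)`. -/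
theorem density_L53_from_dual_LT_bound
    (F : ℝ → ℝ) (L₁ L₂ B C : ℝ) (hL₁ : 0 ≤ L₁) (hB : 0 ≤ B) (hL₂0 : 0 < L₂) (hL₂1 : L₂ < 1)
    (hF : ∀ t : ℝ, 0 ≤ t →
      F t = sSup {y : ℝ | ∃ v : ℝ, 0 ≤ v ∧
        y = t * v - L₁ * B * v ^ ((3 : ℝ) / 2) - L₂ * v ^ ((5 : ℝ) / 2)})
    (ρ : EuclideanSpace ℝ (Fin 3) → ℝ) (hρ0 : ∀ x, 0 ≤ ρ x) (hρint : Integrable ρ)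
    (hdual : ∀ f : EuclideanSpace ℝ (Fin 3) → ℝ, (∀ x, 0 ≤ f x) →
      MemLp f (ENNReal.ofReal ((3 : ℝ) / 2)) (volume : Measure (EuclideanSpace ℝ (Fin 3))) →
      MemLp f (ENNReal.ofReal ((5 : ℝ) / 2)) (volume : Measure (EuclideanSpace ℝ (Fin 3))) →
      ∫ x, (ρ x * f x - L₁ * B * f x ^ ((3 : ℝ) / 2) - L₂ * f x ^ ((5 : ℝ) / 2)) ≤ C) :
    (∀ M : ℝ, 0 < M →
      (1 - L₂) * ∫ x in {x | ρ x ≤ M}, ρ x ^ ((5 : ℝ) / 3)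
        ≤ C + L₁ * B * ∫ x in {x | ρ x ≤ M}, ρ x) ∧
    MemLp ρ (ENNReal.ofReal ((5 : ℝ) / 3)) (volume : Measure (EuclideanSpace ℝ (Fin 3))) :=
  density_L53_from_dual_LT_bound_general L₁ L₂ B C hL₁ hB hL₂1 ρ hρ0 hρint hdual
end
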